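/- arXiv:1712.03513 — 2 statements merged into one kernel-verified Lean document; each statement's English description precedes it below -/
import Mathlib

section
/- Let X and Y be distributive lattices, with Y conditionally complete and satisfying the dual to the infinite distributive law. Suppose maps f : X → Y and φ, ψ : X × X → Y satisfy: (1) φ(z,z) ≤ φ(x,y) whenever x ≤ z and y ≤ z; (2) ψ(x,y) ≤ ψ(z,z) whenever x ≤ z and y ≤ z; and (3) φ(x,y) ∧ f(x ∨ y) ≤ f(x) ∨ f(y) ≤ f(x ∨ y) ∨ ψ(x,y) for all x, y ∈ X. Then there exists a join homomorphism F : X → Y such that φ(x,x) ∧ f(x) ≤ F(x) ≤ f(x) ∨ ψ(x,x) for every x ∈ X. -/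
/-!
Put `h u = φ(u,u) ⊓ f u`. Condition (1) with the left half of (3) and distributivity of `Y` make
`h` subadditive, and the right half of (3) with (2) bounds `h` on `Iic x` by `f x ⊔ ψ(x,x)`.
Then `F x = sup {h u | u ≤ x}` is a join homomorphism: for `w ≤ x ⊔ y`, distributivity of `X`
gives `w = (w ⊓ x) ⊔ (w ⊓ y)`, hence `h w ≤ h (w ⊓ x) ⊔ h (w ⊓ y) ≤ F x ⊔ F y`.
-/

open Set

section SupBelow

variable {X Y : Type*} [ConditionallyCompleteLattice Y]

def supBelow [Preorder X] (h : X → Y) (x : X) : Y :=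
  sSup (h '' Iic x)

lemma le_supBelow [Preorder X] {h : X → Y} {x u : X} (hb : BddAbove (h '' Iic x))
    (hu : u ≤ x) : h u ≤ supBelow h x :=
  le_csSup hb (mem_image_of_mem h hu)

lemma supBelow_le [Preorder X] {h : X → Y} {x : X} {c : Y} (hc : ∀ u ≤ x, h u ≤ c) :
    supBelow h x ≤ c :=
  csSup_le (nonempty_Iic.image h) (forall_mem_image.2 hc)

lemma supBelow_mono [Preorder X] {h : X → Y} (hb : ∀ x, BddAbove (h '' Iic x)) :
    Monotone (supBelow h) :=
  fun _ y hxy => supBelow_le fun _ hu => le_supBelow (hb y) (hu.trans hxy)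

lemma supBelow_sup [DistribLattice X] {h : X → Y} (hsub : ∀ a b, h (a ⊔ b) ≤ h a ⊔ h b)
    (hb : ∀ x, BddAbove (h '' Iic x)) (x y : X) :
    supBelow h (x ⊔ y) = supBelow h x ⊔ supBelow h y := by
  refine le_antisymm (supBelow_le fun w hw => ?_) ((supBelow_mono hb).le_map_sup x y)
  calc h w = h (w ⊓ x ⊔ w ⊓ y) := by rw [← inf_sup_left, inf_eq_left.2 hw]
    _ ≤ h (w ⊓ x) ⊔ h (w ⊓ y) := hsub _ _
    _ ≤ supBelow h x ⊔ supBelow h y :=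
      sup_le_sup (le_supBelow (hb x) inf_le_right) (le_supBelow (hb y) inf_le_right)

end SupBelow

lemma diag_inf_apply_sup_le {X Y : Type*} [Lattice X] [DistribLattice Y] {f : X → Y}
    {φ : X × X → Y} (hφ : ∀ x y z : X, x ≤ z → y ≤ z → φ (z, z) ≤ φ (x, y))
    (hf : ∀ x y : X, φ (x, y) ⊓ f (x ⊔ y) ≤ f x ⊔ f y) (a b : X) :
    φ (a ⊔ b, a ⊔ b) ⊓ f (a ⊔ b) ≤ φ (a, a) ⊓ f a ⊔ φ (b, b) ⊓ f b := by
  set c := φ (a ⊔ b, a ⊔ b)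
  calc c ⊓ f (a ⊔ b) ≤ c ⊓ (f a ⊔ f b) :=
        le_inf inf_le_left
          ((inf_le_inf_right _ (hφ a b _ le_sup_left le_sup_right)).trans (hf a b))
    _ = c ⊓ f a ⊔ c ⊓ f b := inf_sup_left _ _ _
    _ ≤ φ (a, a) ⊓ f a ⊔ φ (b, b) ⊓ f b :=
      sup_le_sup (inf_le_inf_right _ (hφ a a _ le_sup_left le_sup_left))
        (inf_le_inf_right _ (hφ b b _ le_sup_right le_sup_right))

lemma apply_le_sup_diag {X Y : Type*} [Lattice X] [Lattice Y] {f : X → Y} {ψ : X × X → Y}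
    (hψ : ∀ x y z : X, x ≤ z → y ≤ z → ψ (x, y) ≤ ψ (z, z))
    (hf : ∀ x y : X, f x ⊔ f y ≤ f (x ⊔ y) ⊔ ψ (x, y)) {u x : X} (hu : u ≤ x) :
    f u ≤ f x ⊔ ψ (x, x) :=
  calc f u ≤ f (u ⊔ x) ⊔ ψ (u, x) := le_sup_left.trans (hf u x)
    _ ≤ f x ⊔ ψ (x, x) := by rw [sup_eq_right.2 hu]; exact sup_le_sup_left (hψ u x x hu le_rfl) _

theorem stability_error_functions_general {X Y : Type*} [DistribLattice X]
    [ConditionallyCompleteLattice Y]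
    (hYdistrib : ∀ a b c : Y, a ⊓ (b ⊔ c) = (a ⊓ b) ⊔ (a ⊓ c))
    (f : X → Y) (φ ψ : X × X → Y)
    (hφ : ∀ x y z : X, x ≤ z → y ≤ z → φ (z, z) ≤ φ (x, y))
    (hψ : ∀ x y z : X, x ≤ z → y ≤ z → ψ (x, y) ≤ ψ (z, z))
    (hf₁ : ∀ x y : X, φ (x, y) ⊓ f (x ⊔ y) ≤ f x ⊔ f y)
    (hf₂ : ∀ x y : X, f x ⊔ f y ≤ f (x ⊔ y) ⊔ ψ (x, y)) :
    ∃ F : X → Y, (∀ x y, F (x ⊔ y) = F x ⊔ F y) ∧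
      ∀ x, φ (x, x) ⊓ f x ≤ F x ∧ F x ≤ f x ⊔ ψ (x, x) := by
  let : DistribLattice Y := DistribLattice.ofInfSupLe fun a b c => (hYdistrib a b c).le
  set h : X → Y := fun u => φ (u, u) ⊓ f u
  have hbound : ∀ x, ∀ u ≤ x, h u ≤ f x ⊔ ψ (x, x) :=
    fun _ _ hu => inf_le_right.trans (apply_le_sup_diag hψ hf₂ hu)
  have hbdd : ∀ x, BddAbove (h '' Iic x) := fun x => ⟨_, forall_mem_image.2 (hbound x)⟩
  exact ⟨supBelow h, supBelow_sup (diag_inf_apply_sup_le hφ hf₁) hbdd,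
    fun x => ⟨le_supBelow (hbdd x) le_rfl, supBelow_le (hbound x)⟩⟩

/-- Theorem 5 (stability with error functions): under the listed hypotheses there
exists a join homomorphism `F` with `φ(x,x) ⊓ f(x) ≤ F(x) ≤ f(x) ⊔ ψ(x,x)`. -/
theorem stability_error_functions {X Y : Type*} [DistribLattice X]
    [ConditionallyCompleteLattice Y]
    (hYdistrib : ∀ a b c : Y, a ⊓ (b ⊔ c) = (a ⊓ b) ⊔ (a ⊓ c))
    (hYdualinf : ∀ (y : Y) (S : Set Y), S.Nonempty → BddBelow S →
      y ⊔ sInf S = sInf ((fun s => y ⊔ s) '' S))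
    (f : X → Y) (φ ψ : X × X → Y)
    (hφ : ∀ x y z : X, x ≤ z → y ≤ z → φ (z, z) ≤ φ (x, y))
    (hψ : ∀ x y z : X, x ≤ z → y ≤ z → ψ (x, y) ≤ ψ (z, z))
    (hf₁ : ∀ x y : X, φ (x, y) ⊓ f (x ⊔ y) ≤ f x ⊔ f y)
    (hf₂ : ∀ x y : X, f x ⊔ f y ≤ f (x ⊔ y) ⊔ ψ (x, y)) :
    ∃ F : X → Y, (∀ x y, F (x ⊔ y) = F x ⊔ F y) ∧
      ∀ x, φ (x, x) ⊓ f x ≤ F x ∧ F x ≤ f x ⊔ ψ (x, x) :=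
  stability_error_functions_general hYdistrib f φ ψ hφ hψ hf₁ hf₂
end

section
/- Let D ⊆ ℝ, ε ≥ 0, and let f : D → ℝ satisfy max{f(x), f(y)} − f(max{x, y}) ≤ ε for all x, y ∈ D. Then there exists an increasing (monotone nondecreasing) function F : D → ℝ such that f(x) ≤ F(x) ≤ f(x) + ε for every x ∈ D. -/
/-!
Take `F x = sup_{y ≤ x} f y`. It is monotone and dominates `f`, and the hypothesis with
`x ≤ y` reads `f x - f y ≤ ε`, which bounds that supremum by `f y + ε`.
-/

open Set

section RunningSup

variable {α : Type*} [Preorder α]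

/-- Junk (`sSup` of an unbounded set) where `f` is unbounded on `Iic x`. -/
noncomputable def runningSup (f : α → ℝ) (x : α) : ℝ :=
  sSup (f '' Iic x)

variable {f : α → ℝ} {ε : ℝ}

theorem bddAbove_image_Iic_of_le_add (hf : ∀ ⦃x y⦄, y ≤ x → f y ≤ f x + ε) (x : α) :
    BddAbove (f '' Iic x) :=
  ⟨f x + ε, forall_mem_image.2 fun _ hy => hf hy⟩

theorem le_runningSup (hf : ∀ ⦃x y⦄, y ≤ x → f y ≤ f x + ε) (x : α) :
    f x ≤ runningSup f x :=
  le_csSup (bddAbove_image_Iic_of_le_add hf x) (mem_image_of_mem f self_mem_Iic)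

theorem runningSup_le_add (hf : ∀ ⦃x y⦄, y ≤ x → f y ≤ f x + ε) (x : α) :
    runningSup f x ≤ f x + ε :=
  csSup_le (image_nonempty.2 nonempty_Iic) (forall_mem_image.2 fun _ hy => hf hy)

theorem monotone_runningSup (hf : ∀ ⦃x y⦄, y ≤ x → f y ≤ f x + ε) :
    Monotone (runningSup f) := fun _ b hab =>
  csSup_le_csSup (bddAbove_image_Iic_of_le_add hf b) (image_nonempty.2 nonempty_Iic)
    (image_mono (Iic_subset_Iic.2 hab))

end RunningSup

theorem le_add_of_max_sub_le {α : Type*} [LinearOrder α] {f : α → ℝ} {ε : ℝ}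
    (hf : ∀ x y, max (f x) (f y) - f (max x y) ≤ ε) {x y : α} (hyx : y ≤ x) :
    f y ≤ f x + ε := by
  have h := hf y x
  rw [max_eq_right hyx] at h
  linarith [le_max_left (f y) (f x)]

theorem approx_increasing_upper_envelope_general (D : Set ℝ) (ε : ℝ)
    (f : D → ℝ)
    (hf : ∀ x y : D, max (f x) (f y) - f (max x y) ≤ ε) :
    ∃ F : D → ℝ, Monotone F ∧ ∀ x : D, f x ≤ F x ∧ F x ≤ f x + ε := by
  have hle : ∀ ⦃x y : D⦄, y ≤ x → f y ≤ f x + ε := fun _ _ => le_add_of_max_sub_le hf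
  exact ⟨runningSup f, monotone_runningSup hle,
    fun x => ⟨le_runningSup hle x, runningSup_le_add hle x⟩⟩

/-- The intermediate claim in the proof of Corollary 1: there is an increasing
`F` with `f(x) ≤ F(x) ≤ f(x) + ε`. -/
theorem approx_increasing_upper_envelope (D : Set ℝ) (ε : ℝ) (hε : 0 ≤ ε)
    (f : D → ℝ)
    (hf : ∀ x y : D, max (f x) (f y) - f (max x y) ≤ ε) :
    ∃ F : D → ℝ, Monotone F ∧ ∀ x : D, f x ≤ F x ∧ F x ≤ f x + ε :=
  approx_increasing_upper_envelope_general D ε f hf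
end
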